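/- The 2-rank of the compact symplectic group Sp(n) (the group of n×n quaternionic unitary matrices) equals n. -/

import Mathlib

/-!
An elementary abelian subgroup `{A_v | v ∈ (ℤ/2)^t}` of `Sp(n)` consists of commuting
self-adjoint involutions, so the character projections `P_w = 2⁻ᵗ ∑_v (-1)^(w⬝v) A_v` are star
projections summing to `1`, and `A_u = ∑_w (-1)^(w⬝u) P_w`. Faithfulness makes
`u ↦ ((-1)^(w⬝u))_{P_w ≠ 0}` injective, so `2^t ≤ 2^#{w | P_w ≠ 0}`. A nonzero quaternionic
star projection has real trace at least `1`, as it dominates the rank-one projection onto any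
of its nonzero columns, and the real traces of the `P_w` add up to `n`. Hence `t ≤ n`, and the
diagonal matrices with entries `±1` attain `t = n`.
-/

/-- The set of ranks of elementary abelian 2-subgroups of `G`. -/
def rank2Set (G : Type*) [Group G] : Set ℕ :=
  {t | ∃ f : (Fin t → Multiplicative (ZMod 2)) →* G, Function.Injective f}

open Matrix Finset Quaternion

instance Quaternion.instStarModule {R : Type*} [CommRing R] [StarRing R] [TrivialStar R] :
    StarModule R ℍ[R] :=
  ⟨fun r a => by rw [star_trivial r]; exact Quaternion.star_smul r a⟩

lemma Quaternion.re_sum {R ι : Type*} [CommRing R] (s : Finset ι) (f : ι → ℍ[R]) :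
    (∑ i ∈ s, f i).re = ∑ i ∈ s, (f i).re :=
  map_sum (QuaternionAlgebra.reₗ (-1) 0 (-1)) f s

section StarProjection

variable {m : Type*} [Fintype m]

lemma Matrix.re_trace_mul_conjTranspose {n : Type*} [Fintype n] (M : Matrix m n ℍ) :
    (M * Mᴴ).trace.re = ∑ i, ∑ j, normSq (M i j) := by
  simp only [trace, diag_apply, mul_apply, conjTranspose_apply, self_mul_star, re_sum, re_coe]

lemma IsStarProjection.re_trace_nonneg {P : Matrix m m ℍ} (hP : IsStarProjection P) :
    0 ≤ P.trace.re := by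
  have hPP : P * Pᴴ = P := by
    rw [← star_eq_conjTranspose, hP.isSelfAdjoint.star_eq, hP.isIdempotentElem.eq]
  rw [← hPP, re_trace_mul_conjTranspose]
  exact sum_nonneg fun _ _ => sum_nonneg fun _ _ => normSq_nonneg

lemma star_dotProduct_self (w : m → ℍ) :
    star w ⬝ᵥ w = algebraMap ℝ ℍ (∑ i, normSq (w i)) := by
  simp only [dotProduct, Pi.star_apply, star_mul_self, map_sum]
  rfl

lemma re_trace_vecMulVec_star (w : m → ℍ) :
    (vecMulVec w (star w)).trace.re = ∑ i, normSq (w i) := by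
  simp only [trace, diag_apply, vecMulVec_apply, Pi.star_apply, self_mul_star, re_sum, re_coe]

lemma sum_normSq_ne_zero {w : m → ℍ} (hw : w ≠ 0) : ∑ i, normSq (w i) ≠ 0 := by
  obtain ⟨i, hi⟩ := Function.ne_iff.mp hw
  exact (sum_pos' (fun j _ => normSq_nonneg)
    ⟨i, mem_univ _, normSq_nonneg.lt_of_ne' (normSq_ne_zero.2 hi)⟩).ne'

lemma isStarProjection_vecMulVec_star {w : m → ℍ} (hw : w ≠ 0) :
    IsStarProjection ((∑ i, normSq (w i))⁻¹ • vecMulVec w (star w)) := by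
  refine ⟨?_, ?_⟩
  · rw [IsIdempotentElem, smul_mul_smul, vecMulVec_mul_vecMulVec, star_dotProduct_self,
      algebraMap_smul, vecMulVec_smul, smul_smul, mul_assoc,
      inv_mul_cancel₀ (sum_normSq_ne_zero hw), mul_one]
  · rw [IsSelfAdjoint, StarModule.star_smul, star_trivial, star_eq_conjTranspose,
      conjTranspose_vecMulVec, star_star]

lemma IsStarProjection.one_le_re_trace {P : Matrix m m ℍ} (hP : IsStarProjection P)
    (h0 : P ≠ 0) : 1 ≤ P.trace.re := by
  obtain ⟨j, hj⟩ : ∃ j, Pᵀ j ≠ 0 := by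
    by_contra! h
    exact h0 (transpose_eq_zero.mp (funext h))
  set w := Pᵀ j
  have hPw : P *ᵥ w = w := by
    funext i
    simpa only [w, mulVec, dotProduct, transpose_apply, mul_apply]
      using congr_fun₂ hP.isIdempotentElem.eq i j
  have hsub := (isStarProjection_vecMulVec_star hj).sub_of_mul_eq_right hP
    (by rw [Matrix.mul_smul, mul_vecMulVec, hPw])
  have hQ : ((∑ i, normSq (w i))⁻¹ • vecMulVec w (star w)).trace.re = 1 := by
    rw [trace_smul, re_smul, re_trace_vecMulVec_star, smul_eq_mul,
      inv_mul_cancel₀ (sum_normSq_ne_zero hj)]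
  have := hsub.re_trace_nonneg
  rwa [trace_sub, re_sub, hQ, sub_nonneg] at this

lemma card_ne_zero_le_of_sum_eq_one [DecidableEq m] {ι : Type*} [Fintype ι]
    {P : ι → Matrix m m ℍ} (hP : ∀ i, IsStarProjection (P i)) (hsum : ∑ i, P i = 1) :
    Nat.card {i // P i ≠ 0} ≤ Fintype.card m := by
  classical
  rw [Nat.card_eq_fintype_card, Fintype.card_subtype]
  have : (#{i | P i ≠ 0} : ℝ) ≤ Fintype.card m :=
    calc (#{i | P i ≠ 0} : ℝ) = ∑ i with P i ≠ 0, 1 := by simp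
      _ ≤ ∑ i with P i ≠ 0, (P i).trace.re :=
        sum_le_sum fun i hi => (hP i).one_le_re_trace (mem_filter.mp hi).2
      _ ≤ ∑ i, (P i).trace.re :=
        sum_le_sum_of_subset_of_nonneg (subset_univ _) fun i _ _ => (hP i).re_trace_nonneg
      _ = Fintype.card m := by rw [← re_sum, ← trace_sum, hsum, trace_one, re_natCast]
  exact_mod_cast this

end StarProjection

section Characters

variable {ι : Type*} [Fintype ι]

noncomputable def signChar : AddChar (ZMod 2) ℝ :=
  AddChar.zmodChar 2 (by norm_num : (-1 : ℝ) ^ 2 = 1)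

lemma signChar_one : signChar 1 = -1 := by
  rw [signChar, AddChar.zmodChar_apply, ZMod.val_one, pow_one]

lemma signChar_mul_self (a : ZMod 2) : signChar a * signChar a = 1 := by
  rw [← AddChar.map_add_eq_mul, CharTwo.add_self_eq_zero, AddChar.map_zero_eq_one]

lemma signChar_injective : Function.Injective signChar := by
  have h01 : ∀ a : ZMod 2, a = 0 ∨ a = 1 := by decide
  intro a b h
  rcases h01 a with rfl | rfl <;> rcases h01 b with rfl | rfl <;>
    first | rfl | norm_num [signChar_one] at h

noncomputable def dotSignChar (v : ι → ZMod 2) : AddChar (ι → ZMod 2) ℝ where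
  toFun w := signChar (w ⬝ᵥ v)
  map_zero_eq_one' := by rw [zero_dotProduct, AddChar.map_zero_eq_one]
  map_add_eq_mul' _ _ := by rw [add_dotProduct, AddChar.map_add_eq_mul]

lemma dotSignChar_apply (v w : ι → ZMod 2) : dotSignChar v w = signChar (w ⬝ᵥ v) := rfl

variable [DecidableEq ι]

lemma dotSignChar_eq_zero_iff {v : ι → ZMod 2} : dotSignChar v = 0 ↔ v = 0 := by
  refine ⟨fun h => funext fun i => signChar_injective ?_, fun h => ?_⟩
  · simpa [dotSignChar, single_dotProduct] using congr($h (Pi.single i 1))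
  · ext w
    simp [dotSignChar, h]

lemma sum_signChar_dotProduct (v : ι → ZMod 2) :
    ∑ w : ι → ZMod 2, signChar (w ⬝ᵥ v) = if v = 0 then 2 ^ Fintype.card ι else 0 := by
  simpa [dotSignChar_apply, dotSignChar_eq_zero_iff, Fintype.card_fun]
    using (dotSignChar v).sum_eq_ite

end Characters

section CharProjections

variable {ι : Type*} [Fintype ι] [DecidableEq ι] {R : Type*} [Ring R] [Algebra ℝ R]
  (A : Multiplicative (ι → ZMod 2) →* R)

noncomputable def charProj (w : ι → ZMod 2) : R :=
  (2 ^ Fintype.card ι : ℝ)⁻¹ • ∑ v, signChar (w ⬝ᵥ v) • A (.ofAdd v)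

lemma mul_charProj (u w : ι → ZMod 2) :
    A (.ofAdd u) * charProj A w = signChar (w ⬝ᵥ u) • charProj A w := by
  have hsum : A (.ofAdd u) * ∑ v, signChar (w ⬝ᵥ v) • A (.ofAdd v)
      = signChar (w ⬝ᵥ u) • ∑ v, signChar (w ⬝ᵥ v) • A (.ofAdd v) := by
    rw [mul_sum, smul_sum]
    refine Fintype.sum_equiv (Equiv.addLeft u) _ _ fun v => ?_
    rw [Equiv.coe_addLeft, mul_smul_comm, ← map_mul, ← ofAdd_add, smul_smul, dotProduct_add,
      AddChar.map_add_eq_mul, ← mul_assoc, signChar_mul_self, one_mul]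
  rw [charProj, mul_smul_comm, hsum, smul_comm]

lemma isIdempotentElem_charProj (w : ι → ZMod 2) : IsIdempotentElem (charProj A w) := by
  have hcard : ((2 : ℝ) ^ Fintype.card ι)⁻¹ * 2 ^ Fintype.card ι = 1 :=
    inv_mul_cancel₀ (by positivity)
  calc charProj A w * charProj A w
      = (2 ^ Fintype.card ι : ℝ)⁻¹ • ∑ v : ι → ZMod 2, charProj A w := by
        nth_rewrite 1 [charProj]
        rw [smul_mul_assoc, sum_mul]
        simp only [smul_mul_assoc, mul_charProj, smul_smul, signChar_mul_self, one_smul]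
    _ = charProj A w := by
        rw [sum_const, card_univ, Fintype.card_fun, ZMod.card, ← Nat.cast_smul_eq_nsmul ℝ,
          smul_smul, Nat.cast_pow, Nat.cast_ofNat, hcard, one_smul]

lemma sum_charProj : ∑ w, charProj A w = 1 := by
  simp only [charProj, ← smul_sum]
  rw [sum_comm]
  simp only [← sum_smul, sum_signChar_dotProduct, ite_smul, zero_smul, sum_ite_eq', mem_univ,
    if_true, smul_smul, ofAdd_zero, map_one]
  rw [inv_mul_cancel₀ (by positivity), one_smul]

lemma eq_sum_charProj (u : ι → ZMod 2) :
    A (.ofAdd u) = ∑ w, signChar (w ⬝ᵥ u) • charProj A w := by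
  rw [← mul_one (A _), ← sum_charProj A, mul_sum]
  exact sum_congr rfl fun w _ => mul_charProj A u w

lemma isStarProjection_charProj [StarRing R] [StarModule ℝ R] (hA : ∀ v, IsSelfAdjoint (A v))
    (w : ι → ZMod 2) : IsStarProjection (charProj A w) :=
  ⟨isIdempotentElem_charProj A w,
    .smul (.all _) (isSelfAdjoint_sum _ fun _ _ => .smul (.all _) (hA _))⟩

lemma card_le_card_charProj_ne_zero (hA : Function.Injective A) :
    Fintype.card ι ≤ Nat.card {w // charProj A w ≠ 0} := by
  classical
  have hinj : Function.Injective
      fun (u : ι → ZMod 2) (w : {w // charProj A w ≠ 0}) => w.1 ⬝ᵥ u := by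
    intro u u' h
    apply Multiplicative.ofAdd.injective (hA _)
    rw [eq_sum_charProj, eq_sum_charProj]
    refine sum_congr rfl fun w _ => ?_
    by_cases hw : charProj A w = 0
    · simp only [hw, smul_zero]
    · rw [show w ⬝ᵥ u = w ⬝ᵥ u' from congr_fun h ⟨w, hw⟩]
  have := Fintype.card_le_of_injective _ hinj
  simp only [Fintype.card_fun, ZMod.card] at this
  rw [Nat.card_eq_fintype_card]
  exact (Nat.pow_le_pow_iff_right (by norm_num)).mp this

end CharProjections

lemma Unitary.isSelfAdjoint_of_mul_self_eq_one {R : Type*} [Monoid R] [StarMul R] {u : R}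
    (hu : u ∈ unitary R) (h : u * u = 1) : IsSelfAdjoint u :=
  calc star u = star u * (u * u) := by rw [h, mul_one]
    _ = u := by rw [← mul_assoc, Unitary.star_mul_self_of_mem hu, one_mul]

section QuaternionicUnitary

variable {m : Type*} [Fintype m] [DecidableEq m]

theorem card_le_card_of_injective_unitary {ι : Type*} [Fintype ι] [DecidableEq ι]
    (f : (ι → Multiplicative (ZMod 2)) →* unitary (Matrix m m ℍ))
    (hf : Function.Injective f) : Fintype.card ι ≤ Fintype.card m := by
  let A := (unitary (Matrix m m ℍ)).subtype.comp
    (f.comp (MulEquiv.funMultiplicative ι (ZMod 2)).toMonoidHom)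
  have hA : Function.Injective A :=
    Subtype.val_injective.comp (hf.comp (MulEquiv.funMultiplicative ι (ZMod 2)).injective)
  have hsq (v : Multiplicative (ι → ZMod 2)) : v * v = 1 :=
    funext fun i => CharTwo.add_self_eq_zero (v i)
  have hA_sa (v) : IsSelfAdjoint (A v) :=
    Unitary.isSelfAdjoint_of_mul_self_eq_one (f _).2 (by rw [← map_mul, hsq, map_one])
  calc Fintype.card ι ≤ Nat.card {w // charProj A w ≠ 0} :=
        card_le_card_charProj_ne_zero A hA
    _ ≤ Fintype.card m :=
      card_ne_zero_le_of_sum_eq_one (isStarProjection_charProj A hA_sa) (sum_charProj A)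

variable (m) in
noncomputable def diagonalSigns : (m → Multiplicative (ZMod 2)) →* unitary (Matrix m m ℍ) :=
  MonoidHom.codRestrict ((diagonalRingHom m ℍ).toMonoidHom.comp
    (((algebraMap ℝ ℍ : ℝ →* ℍ).comp signChar.toMonoidHom).compLeft m)) (unitary _) fun g => by
    simp [Unitary.mem_iff, star_eq_conjTranspose, diagonal_conjTranspose, diagonal_mul_diagonal,
      ← Quaternion.coe_mul, signChar_mul_self]

lemma coe_diagonalSigns (g : m → Multiplicative (ZMod 2)) :
    (diagonalSigns m g : Matrix m m ℍ) = diagonal fun i => (signChar (g i).toAdd : ℍ) := rfl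

lemma diagonalSigns_injective : Function.Injective (diagonalSigns m) := by
  intro g g' h
  have hdiag := congr_arg Subtype.val h
  rw [coe_diagonalSigns, coe_diagonalSigns, diagonal_eq_diagonal_iff] at hdiag
  exact funext fun i =>
    Multiplicative.toAdd.injective (signChar_injective (Quaternion.coe_injective (hdiag i)))

end QuaternionicUnitary

/-- The 2-rank of the compact symplectic group `Sp(n)`, realized as the group of
unitary `n × n` quaternionic matrices, is `n`. -/
theorem twoRank_compactSymplecticGroup (n : ℕ) :
    IsGreatest (rank2Set (unitary (Matrix (Fin n) (Fin n) (Quaternion ℝ)))) n :=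
  ⟨⟨diagonalSigns (Fin n), diagonalSigns_injective⟩, fun t ⟨f, hf⟩ => by
    simpa using card_le_card_of_injective_unitary f hf⟩
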